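/- Under the same hypotheses, after k Richardson steps x^{(k)} = G^k x with x = Σ_j α_j φ_j and α_ℓ ≠ 0, for each j ≥ ℓ+1 one has |⟨x^{(k)}, φ_j⟩| / |⟨x^{(k)}, φ_ℓ⟩| ≤ ρ^k · |α_j|/|α_ℓ| with ρ = (λ_n−λ_{ℓ+1})/(λ_n+λ_{ℓ+1}−2λ_ℓ). In particular if λ_ℓ < λ_{ℓ+1} the undesired components decay geometrically relative to the ℓ-th component. -/

import Mathlib

/-!
The Richardson matrix `G = (1 + θ(1+τ)) I - θ A` has the eigenvectors `φ i` of `A`, with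
eigenvalues `μ i = θ ((λ_{ℓ+1} + λ_n)/2 - λ_i)`, so the `i`-th coefficient of `G^k x` is
`α i * μ i ^ k`. For `λ_{ℓ+1} ≤ λ_j ≤ λ_n` the midpoint choice of `τ` gives
`|μ j| ≤ θ (λ_n - λ_{ℓ+1}) / 2 = ρ μ ℓ` with `μ ℓ > 0`, and taking `k`-th powers gives the decay.
-/

open Matrix Finset

section Eigenvectors

variable {ι κ R : Type*} [Fintype ι] [Fintype κ] [DecidableEq κ] [CommRing R]

lemma mulVec_pow_of_mulVec_eq_smul [DecidableEq ι] {M : Matrix ι ι R} {v : ι → R} {c : R}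
    (h : M *ᵥ v = c • v) (k : ℕ) : (M ^ k) *ᵥ v = c ^ k • v := by
  induction k with
  | zero => simp
  | succ k ih =>
    rw [pow_succ', ← mulVec_mulVec, ih, mulVec_smul, h, smul_smul, pow_succ]

lemma smul_one_sub_smul_mulVec_of_mulVec_eq_smul [DecidableEq ι] {A : Matrix ι ι R} {v : ι → R}
    {c : R} (h : A *ᵥ v = c • v) (a b : R) :
    (a • (1 : Matrix ι ι R) - b • A) *ᵥ v = (a - b * c) • v := by
  rw [sub_mulVec, smul_mulVec, smul_mulVec, one_mulVec, h, smul_smul, sub_smul]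

lemma sum_smul_dotProduct_of_orthonormal {φ : κ → ι → R}
    (hortho : ∀ i j, φ i ⬝ᵥ φ j = if i = j then (1 : R) else 0) (c : κ → R) (i : κ) :
    (∑ p, c p • φ p) ⬝ᵥ φ i = c i := by
  simp [sum_dotProduct, smul_dotProduct, hortho]

lemma pow_mulVec_sum_smul_dotProduct [DecidableEq ι] {M : Matrix ι ι R} {φ : κ → ι → R}
    {μ : κ → R} (hortho : ∀ i j, φ i ⬝ᵥ φ j = if i = j then (1 : R) else 0)
    (heig : ∀ p, M *ᵥ φ p = μ p • φ p) (α : κ → R) (k : ℕ) (i : κ) :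
    (M ^ k) *ᵥ (∑ p, α p • φ p) ⬝ᵥ φ i = α i * μ i ^ k := by
  have hcoef : (M ^ k) *ᵥ (∑ p, α p • φ p) = ∑ p, (α p * μ p ^ k) • φ p := by
    simp only [mulVec_sum, mulVec_smul, mulVec_pow_of_mulVec_eq_smul (heig _), smul_smul]
  rw [hcoef, sum_smul_dotProduct_of_orthonormal hortho]

end Eigenvectors

lemma abs_mul_midpoint_sub_le {θ a b c t : ℝ} (hθ : 0 ≤ θ) (hab : a < b) (hbt : b ≤ t)
    (htc : t ≤ c) :
    |θ * ((b + c) / 2 - t)| ≤ (c - b) / (c + b - 2 * a) * (θ * ((b + c) / 2 - a)) := by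
  have hden : c + b - 2 * a ≠ 0 := by linarith
  have hdist : |(b + c) / 2 - t| ≤ (c - b) / 2 := abs_le.2 ⟨by linarith, by linarith⟩
  calc |θ * ((b + c) / 2 - t)| = θ * |(b + c) / 2 - t| := by rw [abs_mul, abs_of_nonneg hθ]
    _ ≤ θ * ((c - b) / 2) := by gcongr
    _ = (c - b) / (c + b - 2 * a) * (θ * ((b + c) / 2 - a)) := by field_simp; ring

lemma abs_mul_pow_div_abs_mul_pow_le {a b m M ρ : ℝ} (hM : 0 < M) (hm : |m| ≤ ρ * M) (k : ℕ) :
    |a * m ^ k| / |b * M ^ k| ≤ ρ ^ k * (|a| / |b|) := by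
  have hratio : |m| / M ≤ ρ := (div_le_iff₀ hM).2 hm
  calc |a * m ^ k| / |b * M ^ k| = (|m| / M) ^ k * (|a| / |b|) := by
        rw [abs_mul, abs_mul, abs_pow, abs_pow, abs_of_pos hM, mul_div_mul_comm, div_pow,
          mul_comm]
    _ ≤ ρ ^ k * (|a| / |b|) := by gcongr

theorem richardson_k_steps_geometric_decay
    (n : ℕ) (A : Matrix (Fin (n + 1)) (Fin (n + 1)) ℝ)
    (φ : Fin (n + 1) → (Fin (n + 1) → ℝ)) (lam : Fin (n + 1) → ℝ)
    (hortho : ∀ i j, φ i ⬝ᵥ φ j = if i = j then (1 : ℝ) else 0)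
    (heig : ∀ j, A.mulVec (φ j) = lam j • φ j)
    (hmono : Monotone lam)
    (ℓ : Fin (n + 1)) (hℓ : (ℓ : ℕ) + 1 ≤ n)
    (hgap : lam ℓ < lam ⟨(ℓ : ℕ) + 1, by omega⟩)
    (θ τ : ℝ) (hθ : 0 < θ)
    (hτ : τ = (lam ⟨(ℓ : ℕ) + 1, by omega⟩ + lam (Fin.last n)) / 2 - 1 / θ - 1)
    (G : Matrix (Fin (n + 1)) (Fin (n + 1)) ℝ)
    (hG : G = (1 + θ * (1 + τ)) • (1 : Matrix (Fin (n + 1)) (Fin (n + 1)) ℝ) - θ • A)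
    (ρ : ℝ)
    (hρ : ρ = (lam (Fin.last n) - lam ⟨(ℓ : ℕ) + 1, by omega⟩) /
        (lam (Fin.last n) + lam ⟨(ℓ : ℕ) + 1, by omega⟩ - 2 * lam ℓ))
    (α : Fin (n + 1) → ℝ) (x : Fin (n + 1) → ℝ)
    (hx : x = ∑ j, α j • φ j)
    (j : Fin (n + 1)) (hj : (ℓ : ℕ) + 1 ≤ (j : ℕ)) (k : ℕ) :
    |(G ^ k).mulVec x ⬝ᵥ φ j| / |(G ^ k).mulVec x ⬝ᵥ φ ℓ| ≤ ρ ^ k * (|α j| / |α ℓ|) := by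
  set l₁ := lam ⟨(ℓ : ℕ) + 1, by omega⟩
  set lₙ := lam (Fin.last n)
  set μ : Fin (n + 1) → ℝ := fun i => θ * ((l₁ + lₙ) / 2 - lam i)
  have hGeig : ∀ i, G *ᵥ φ i = μ i • φ i := fun i => by
    rw [hG, smul_one_sub_smul_mulVec_of_mulVec_eq_smul (heig i), hτ]
    congr 1
    field_simp
    ring
  have hcoef : ∀ i, (G ^ k) *ᵥ x ⬝ᵥ φ i = α i * μ i ^ k := fun i =>
    hx ▸ pow_mulVec_sum_smul_dotProduct hortho hGeig α k i
  have hl₁j : l₁ ≤ lam j := hmono (Fin.mk_le_of_le_val hj)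
  have hjn : lam j ≤ lₙ := hmono (Fin.le_last j)
  have hμℓ : 0 < μ ℓ := mul_pos hθ (by linarith)
  have hμj : |μ j| ≤ ρ * μ ℓ := by
    rw [hρ]
    exact abs_mul_midpoint_sub_le hθ.le hgap hl₁j hjn
  rw [hcoef, hcoef]
  exact abs_mul_pow_div_abs_mul_pow_le hμℓ hμj k
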